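/- arXiv:2205.01955 — 2 statements merged into one kernel-verified Lean document; each statement's English description precedes it below -/
import Mathlib

section
/- If φ is a fuzzy simulation between fuzzy automata A and A', and ψ is a fuzzy simulation between A' and A'', then the composition φ ∘ ψ is a fuzzy simulation between A and A''. -/
/-- A complete residuated lattice: a complete lattice with a commutative monoid
structure whose unit is the top element, together with a residuum `himp`
satisfying the adjointness property. -/
class CompleteResiduatedLattice (L : Type*) extends CompleteLattice L, CommMonoid L where
  himp : L → L → L
  adjoint : ∀ a b c : L, a * b ≤ c ↔ a ≤ himp b c
  one_eq_top : (1 : L) = ⊤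

open CompleteResiduatedLattice

variable {L : Type*} [CompleteResiduatedLattice L]

/-- Sup-⊗ composition of fuzzy relations. -/
def relComp {X Y Z : Type*} (φ : X → Y → L) (ψ : Y → Z → L) : X → Z → L :=
  fun x z => ⨆ y, φ x y * ψ y z

/-- Composition of a fuzzy relation with a fuzzy set. -/
def relSet {X Y : Type*} (φ : X → Y → L) (g : Y → L) : X → L :=
  fun x => ⨆ y, φ x y * g y

/-- Composition of a fuzzy set with a fuzzy relation. -/
def setRel {X Y : Type*} (f : X → L) (φ : X → Y → L) : Y → L :=
  fun y => ⨆ x, f x * φ x y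

/-- The converse of a fuzzy relation. -/
def conv {X Y : Type*} (φ : X → Y → L) : Y → X → L := fun y x => φ x y

/-- The fuzzy degree of inclusion of fuzzy sets. -/
def fuzS {X : Type*} (f g : X → L) : L := ⨅ x, himp (f x) (g x)

/-- The fuzzy degree of equality of fuzzy sets. -/
def fuzE {X : Type*} (f g : X → L) : L := ⨅ x, himp (f x) (g x) ⊓ himp (g x) (f x)

/-- A fuzzy automaton over the alphabet `Sig` with state set `A`. -/
structure FuzzyAutomaton (L : Type*) (Sig : Type*) (A : Type*) where
  δ : A → Sig → A → L
  σ : A → L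
  τ : A → L

variable {Sig : Type*}

/-- A fuzzy simulation between two fuzzy automata. -/
def IsFuzzySimulation {A A' : Type*} (M : FuzzyAutomaton L Sig A)
    (M' : FuzzyAutomaton L Sig A') (φ : A → A' → L) : Prop :=
  (∀ s, relComp (conv φ) (fun x y => M.δ x s y) ≤
        relComp (fun x' y' => M'.δ x' s y') (conv φ)) ∧
  relSet (conv φ) M.τ ≤ M'.τ

/-- The norm of a fuzzy simulation: `S(σ^A, σ^{A'} ∘ φ⁻¹)`. -/
def simNorm {A A' : Type*} (M : FuzzyAutomaton L Sig A)
    (M' : FuzzyAutomaton L Sig A') (φ : A → A' → L) : L :=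
  fuzS M.σ (setRel M'.σ (conv φ))

/-- A fuzzy bisimulation between two fuzzy automata. -/
def IsFuzzyBisimulation {A A' : Type*} (M : FuzzyAutomaton L Sig A)
    (M' : FuzzyAutomaton L Sig A') (φ : A → A' → L) : Prop :=
  IsFuzzySimulation M M' φ ∧ IsFuzzySimulation M' M (conv φ)

/-- The norm of a fuzzy bisimulation. -/
def bisimNorm {A A' : Type*} (M : FuzzyAutomaton L Sig A)
    (M' : FuzzyAutomaton L Sig A') (φ : A → A' → L) : L :=
  simNorm M M' φ ⊓ simNorm M' M (conv φ)

/-- The fuzzy language recognized from a given state: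
`L(A,x)(s₁…sₙ) = (δ_{s₁} ∘ … ∘ δ_{sₙ} ∘ τ)(x)`. -/
def langFrom {A : Type*} (M : FuzzyAutomaton L Sig A) : A → List Sig → L
  | x, [] => M.τ x
  | x, s :: w => ⨆ y, M.δ x s y * langFrom M y w

/-- The fuzzy language recognized by a fuzzy automaton. -/
def lang {A : Type*} (M : FuzzyAutomaton L Sig A) (w : List Sig) : L :=
  ⨆ x, M.σ x * langFrom M x w

namespace CompleteResiduatedLattice

theorem gc_mul_himp (b : L) : GaloisConnection (· * b) (himp b) :=
  fun a c => adjoint a b c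

theorem mul_le_mul_right' {a a' : L} (h : a ≤ a') (b : L) : a * b ≤ a' * b :=
  (gc_mul_himp b).monotone_l h

theorem mul_le_mul_left' {b b' : L} (h : b ≤ b') (a : L) : a * b ≤ a * b' := by
  simpa only [mul_comm a] using mul_le_mul_right' h a

theorem iSup_mul {ι : Sort*} (f : ι → L) (b : L) : (⨆ i, f i) * b = ⨆ i, f i * b :=
  (gc_mul_himp b).l_iSup

theorem mul_iSup {ι : Sort*} (a : L) (f : ι → L) : a * (⨆ i, f i) = ⨆ i, a * f i := by
  simpa only [mul_comm a] using iSup_mul f a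

end CompleteResiduatedLattice

section FuzzyRelations

variable {X Y Z W : Type*}

theorem relComp_assoc (φ : X → Y → L) (ψ : Y → Z → L) (χ : Z → W → L) :
    relComp (relComp φ ψ) χ = relComp φ (relComp ψ χ) := by
  funext x w
  simp only [relComp, iSup_mul, mul_iSup, mul_assoc]
  exact iSup_comm

theorem relSet_relComp (φ : X → Y → L) (ψ : Y → Z → L) (g : Z → L) :
    relSet (relComp φ ψ) g = relSet φ (relSet ψ g) := by
  funext x
  simp only [relSet, relComp, iSup_mul, mul_iSup, mul_assoc]
  exact iSup_comm

theorem conv_relComp (φ : X → Y → L) (ψ : Y → Z → L) :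
    conv (relComp φ ψ) = relComp (conv ψ) (conv φ) := by
  funext z x
  simp only [conv, relComp, mul_comm]

theorem relComp_mono_left {φ φ' : X → Y → L} (h : φ ≤ φ') (ψ : Y → Z → L) :
    relComp φ ψ ≤ relComp φ' ψ :=
  fun x z => iSup_mono fun y => mul_le_mul_right' (h x y) (ψ y z)

theorem relComp_mono_right (φ : X → Y → L) {ψ ψ' : Y → Z → L} (h : ψ ≤ ψ') :
    relComp φ ψ ≤ relComp φ ψ' :=
  fun x z => iSup_mono fun y => mul_le_mul_left' (h y z) (φ x y)

theorem relSet_mono_right (φ : X → Y → L) {g g' : Y → L} (h : g ≤ g') :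
    relSet φ g ≤ relSet φ g' :=
  fun x => iSup_mono fun y => mul_le_mul_left' (h y) (φ x y)

end FuzzyRelations

theorem stmt7_general {A A' A'' : Type*}
    (M : FuzzyAutomaton L Sig A) (M' : FuzzyAutomaton L Sig A') (M'' : FuzzyAutomaton L Sig A'')
    (φ : A → A' → L) (ψ : A' → A'' → L)
    (hφ : IsFuzzySimulation M M' φ) (hψ : IsFuzzySimulation M' M'' ψ) :
    IsFuzzySimulation M M'' (relComp φ ψ) := by
  obtain ⟨hφδ, hφτ⟩ := hφ
  obtain ⟨hψδ, hψτ⟩ := hψ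
  refine ⟨fun s => ?_, ?_⟩
  · set δ := fun x y => M.δ x s y
    set δ' := fun x y => M'.δ x s y
    set δ'' := fun x y => M''.δ x s y
    calc relComp (conv (relComp φ ψ)) δ
        = relComp (conv ψ) (relComp (conv φ) δ) := by rw [conv_relComp, relComp_assoc]
      _ ≤ relComp (conv ψ) (relComp δ' (conv φ)) := relComp_mono_right _ (hφδ s)
      _ = relComp (relComp (conv ψ) δ') (conv φ) := (relComp_assoc _ _ _).symm
      _ ≤ relComp (relComp δ'' (conv ψ)) (conv φ) := relComp_mono_left (hψδ s) _
      _ = relComp δ'' (conv (relComp φ ψ)) := by rw [relComp_assoc, conv_relComp]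
  · calc relSet (conv (relComp φ ψ)) M.τ
        = relSet (conv ψ) (relSet (conv φ) M.τ) := by rw [conv_relComp, relSet_relComp]
      _ ≤ relSet (conv ψ) M'.τ := relSet_mono_right _ hφτ
      _ ≤ M''.τ := hψτ

theorem stmt7 {A A' A'' : Type*} [Nonempty A] [Nonempty A'] [Nonempty A'']
    (M : FuzzyAutomaton L Sig A) (M' : FuzzyAutomaton L Sig A') (M'' : FuzzyAutomaton L Sig A'')
    (φ : A → A' → L) (ψ : A' → A'' → L)
    (hφ : IsFuzzySimulation M M' φ) (hψ : IsFuzzySimulation M' M'' ψ) :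
    IsFuzzySimulation M M'' (relComp φ ψ) :=
  stmt7_general M M' M'' φ ψ hφ hψ
end

section
/- Suppose L is a complete linear residuated lattice whose monoid operation ⊗ is continuous with respect to infima, and A' is image-finite. Then the fuzzy relation φ(x,x') = ⋀_{w∈F_s}(w^A(x) → w^{A'}(x')) is the greatest fuzzy simulation between A and A' (Hennessy-Milner property for fuzzy simulations). -/
open CompleteResiduatedLattice

variable {L : Type*} [CompleteResiduatedLattice L]

variable {Sig : Type*}

/-- The set `F_s` of formulas of the simulation logic. -/
inductive SimForm (L : Type*) (Sig : Type*) where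
  | tau : SimForm L Sig
  | act : Sig → SimForm L Sig → SimForm L Sig
  | imp : L → SimForm L Sig → SimForm L Sig
  | and : SimForm L Sig → SimForm L Sig → SimForm L Sig

/-- Semantics of formulas of `F_s` in a fuzzy automaton. -/
def SimForm.eval {A : Type*} (M : FuzzyAutomaton L Sig A) : SimForm L Sig → A → L
  | .tau, x => M.τ x
  | .act s w, x => ⨆ y, M.δ x s y * SimForm.eval M w y
  | .imp a w, x => himp a (SimForm.eval M w x)
  | .and w₁ w₂, x => SimForm.eval M w₁ x ⊓ SimForm.eval M w₂ x


/-!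
The formulas of `F_s` are preserved along any fuzzy simulation `ψ`, in the graded sense
`ψ x x' ⊗ w^A(x) ≤ w^{A'}(x')`; this makes every simulation lie below `φ`.
For the transition condition of `φ` itself, suppose `r := φ(x,x') ⊗ δ_s(x,y)` is not below
`⋁_{y'} δ'_s(x',y') ⊗ φ(y,y')`. Continuity of `⊗` turns `φ` into an infimum over formulas, so each
of the finitely many `s`-successors `y'` of `x'` has a formula `W y'` with
`r ≰ δ'_s(x',y') ⊗ (W y'^A(y) → W y'^{A'}(y'))`. The conjunction of the formulas
`W y'^A(y) → W y'` is fully true at `y`, so `r ≤ (s ∘ conj)^{A'}(x')`, which is bounded by the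
finite join of those elements; in a chain, an element above `⊥` that is below none of them is not
below their join.
-/

namespace CompleteResiduatedLattice

theorem mul_le_of_le_himp {a b c : L} (h : a ≤ himp b c) : a * b ≤ c := (adjoint a b c).2 h

theorem himp_mul_le (a b : L) : himp a b * a ≤ b := mul_le_of_le_himp le_rfl

theorem himp_self_eq_top (a : L) : himp a a = ⊤ :=
  top_le_iff.1 <| (adjoint ⊤ a a).1 <| by rw [← one_eq_top, one_mul]

theorem mul_sSup_eq (x : L) (s : Set L) : x * sSup s = ⨆ y ∈ s, x * y := by
  refine le_antisymm ?_ (iSup₂_le fun y hy => ?_)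
  · rw [mul_comm]
    refine mul_le_of_le_himp (sSup_le fun y hy => (adjoint _ _ _).1 ?_)
    rw [mul_comm]
    exact le_iSup₂ (f := fun y _ => x * y) y hy
  · rw [mul_comm x y]
    refine mul_le_of_le_himp ((le_sSup hy).trans ((adjoint _ _ _).1 ?_))
    rw [mul_comm]

instance : IsQuantale L where
  mul_sSup_distrib := mul_sSup_eq
  sSup_mul_distrib s y := by simp only [mul_comm _ y, mul_sSup_eq]

end CompleteResiduatedLattice

theorem exists_not_le_mul_of_not_le_mul_iInf
    (cont : ∀ (a : L) (B : Set L), a * sInf B = ⨅ b ∈ B, a * b)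
    {ι : Sort*} {r a : L} {f : ι → L} (h : ¬ r ≤ a * ⨅ i, f i) : ∃ i, ¬ r ≤ a * f i := by
  by_contra! hle
  rw [← sInf_range, cont, iInf_range] at h
  exact h (le_iInf hle)

theorem not_le_finset_sup_of_total {α ι : Type*} [SemilatticeSup α] [OrderBot α]
    (lin : ∀ a b : α, a ≤ b ∨ b ≤ a) {r : α} (hr : r ≠ ⊥) {s : Finset ι} {g : ι → α}
    (h : ∀ i ∈ s, ¬ r ≤ g i) : ¬ r ≤ s.sup g :=
  Finset.sup_induction (p := fun a => ¬ r ≤ a) (fun hbot => hr (le_bot_iff.1 hbot))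
    (fun a ha b hb => by rcases lin a b with hab | hab <;> simpa [hab])
    h

namespace SimForm

variable {A A' : Type*}

/-- `F_s` has no constant formula `⊤`; `τ^A(y) → τ` closes the conjunction instead, being fully
true at `y`. -/
def conjAt (M : FuzzyAutomaton L Sig A) (y : A) (ws : List (SimForm L Sig)) : SimForm L Sig :=
  (ws.map fun w => imp (eval M w y) w).foldr SimForm.and (imp (M.τ y) tau)

theorem eval_conjAt_self (M : FuzzyAutomaton L Sig A) (y : A) (ws : List (SimForm L Sig)) :
    eval M (conjAt M y ws) y = ⊤ := by
  induction ws with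
  | nil => exact himp_self_eq_top _
  | cons w ws ih =>
    simp only [conjAt, List.map_cons, List.foldr_cons, eval] at ih ⊢
    rw [ih, himp_self_eq_top, inf_top_eq]

theorem eval_conjAt_le (M : FuzzyAutomaton L Sig A) (M' : FuzzyAutomaton L Sig A') (y : A)
    {ws : List (SimForm L Sig)} {w : SimForm L Sig} (hw : w ∈ ws) (y' : A') :
    eval M' (conjAt M y ws) y' ≤ himp (eval M w y) (eval M' w y') := by
  induction ws with
  | nil => cases hw
  | cons v ws ih =>
    simp only [conjAt, List.map_cons, List.foldr_cons, eval] at ih ⊢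
    rcases List.mem_cons.1 hw with rfl | hw
    · exact inf_le_left
    · exact inf_le_right.trans (ih hw)

theorem eval_act_le_finset_sup (M' : FuzzyAutomaton L Sig A') {s : Sig} {x' : A'}
    {F : Finset A'} (hF : ∀ y' ∉ F, M'.δ x' s y' = ⊥) {u : SimForm L Sig} {g : A' → L}
    (hu : ∀ y' ∈ F, eval M' u y' ≤ g y') :
    eval M' (act s u) x' ≤ F.sup fun y' => M'.δ x' s y' * g y' := by
  refine iSup_le fun y' => ?_
  by_cases hy : y' ∈ F
  · exact (mul_le_mul_right (hu y' hy) _).trans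
      (Finset.le_sup (f := fun y' => M'.δ x' s y' * g y') hy)
  · rw [hF y' hy, Quantale.bot_mul]
    exact bot_le

theorem mul_eval_le_of_isFuzzySimulation {M : FuzzyAutomaton L Sig A}
    {M' : FuzzyAutomaton L Sig A'} {ψ : A → A' → L} (hψ : IsFuzzySimulation M M' ψ)
    (w : SimForm L Sig) (x : A) (x' : A') : ψ x x' * eval M w x ≤ eval M' w x' := by
  induction w generalizing x x' with
  | tau => exact (le_iSup (fun z => ψ z x' * M.τ z) x).trans (hψ.2 x')
  | act s w ih =>
    simp only [eval, Quantale.mul_iSup_distrib]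
    refine iSup_le fun z => ?_
    have hstep : ψ x x' * M.δ x s z ≤ ⨆ y', M'.δ x' s y' * ψ z y' :=
      (le_iSup (fun u => ψ u x' * M.δ u s z) x).trans (hψ.1 s x' z)
    calc ψ x x' * (M.δ x s z * eval M w z)
        = (ψ x x' * M.δ x s z) * eval M w z := (mul_assoc _ _ _).symm
      _ ≤ (⨆ y', M'.δ x' s y' * ψ z y') * eval M w z := mul_le_mul_left hstep _
      _ = ⨆ y', M'.δ x' s y' * (ψ z y' * eval M w z) := by
        simp only [Quantale.iSup_mul_distrib, mul_assoc]
      _ ≤ ⨆ y', M'.δ x' s y' * eval M' w y' :=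
        iSup_mono fun y' => mul_le_mul_right (ih z y') _
  | imp a w ih =>
    refine (adjoint _ _ _).1 ?_
    rw [mul_assoc]
    exact (mul_le_mul_right (himp_mul_le _ _) _).trans (ih x x')
  | and w₁ w₂ ih₁ ih₂ =>
    exact le_inf ((mul_le_mul_right inf_le_left _).trans (ih₁ x x'))
      ((mul_le_mul_right inf_le_right _).trans (ih₂ x x'))

def simRel (M : FuzzyAutomaton L Sig A) (M' : FuzzyAutomaton L Sig A') : A → A' → L :=
  fun x x' => ⨅ w : SimForm L Sig, himp (eval M w x) (eval M' w x')

variable {M : FuzzyAutomaton L Sig A} {M' : FuzzyAutomaton L Sig A'}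

theorem simRel_mul_eval_le (w : SimForm L Sig) (x : A) (x' : A') :
    simRel M M' x x' * eval M w x ≤ eval M' w x' :=
  mul_le_of_le_himp (iInf_le (fun w => himp (eval M w x) (eval M' w x')) w)

theorem le_simRel_of_isFuzzySimulation {ψ : A → A' → L} (hψ : IsFuzzySimulation M M' ψ) :
    ψ ≤ simRel M M' := fun x x' =>
  le_iInf fun w => (adjoint _ _ _).1 (mul_eval_le_of_isFuzzySimulation hψ w x x')

theorem isFuzzySimulation_simRel (lin : ∀ a b : L, a ≤ b ∨ b ≤ a)
    (cont : ∀ (a : L) (B : Set L), a * sInf B = ⨅ b ∈ B, a * b)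
    (hδ : ∀ (s : Sig) (x' : A'), {y' : A' | M'.δ x' s y' ≠ ⊥}.Finite) :
    IsFuzzySimulation M M' (simRel M M') := by
  refine ⟨fun s x' y => iSup_le fun x => ?_,
    fun x' => iSup_le fun x => simRel_mul_eval_le tau x x'⟩
  show simRel M M' x x' * M.δ x s y ≤ ⨆ y', M'.δ x' s y' * simRel M M' y y'
  by_contra hnot
  set r := simRel M M' x x' * M.δ x s y
  have hr : r ≠ ⊥ := fun h => hnot (h.le.trans bot_le)
  have hW : ∀ y', ∃ w, ¬ r ≤ M'.δ x' s y' * himp (eval M w y) (eval M' w y') := fun y' =>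
    exists_not_le_mul_of_not_le_mul_iInf cont fun h =>
      hnot (h.trans (le_iSup (fun y' => M'.δ x' s y' * simRel M M' y y') y'))
  choose W hW using hW
  set F := (hδ s x').toFinset
  set u := conjAt M y (F.toList.map W)
  have hlower : r ≤ eval M' (act s u) x' := by
    refine (mul_le_mul_right ?_ _).trans (simRel_mul_eval_le (act s u) x x')
    refine le_iSup_of_le (f := fun z => M.δ x s z * eval M u z) y (le_of_eq ?_)
    rw [eval_conjAt_self, ← one_eq_top, mul_one]
  have hupper : eval M' (act s u) x' ≤
      F.sup fun y' => M'.δ x' s y' * himp (eval M (W y') y) (eval M' (W y') y') :=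
    eval_act_le_finset_sup M' (fun y' hy => by simpa [F] using hy)
      fun y' hy => eval_conjAt_le M M' y (List.mem_map_of_mem (Finset.mem_toList.2 hy)) y'
  exact not_le_finset_sup_of_total lin hr (fun y' _ => hW y') (hlower.trans hupper)

end SimForm

theorem stmt16_general {A A' : Type*}
    (lin : ∀ a b : L, a ≤ b ∨ b ≤ a)
    (cont : ∀ (a : L) (B : Set L), a * sInf B = ⨅ b ∈ B, a * b)
    (M : FuzzyAutomaton L Sig A) (M' : FuzzyAutomaton L Sig A')
    (hδ : ∀ (s : Sig) (x' : A'), {y' : A' | M'.δ x' s y' ≠ ⊥}.Finite) :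
    letI φ : A → A' → L := fun x x' =>
      ⨅ w : SimForm L Sig, himp (SimForm.eval M w x) (SimForm.eval M' w x')
    IsFuzzySimulation M M' φ ∧
      ∀ ψ : A → A' → L, IsFuzzySimulation M M' ψ → ψ ≤ φ :=
  ⟨SimForm.isFuzzySimulation_simRel lin cont hδ, fun _ => SimForm.le_simRel_of_isFuzzySimulation⟩

theorem stmt16 {A A' : Type*} [Nonempty A] [Nonempty A']
    (lin : ∀ a b : L, a ≤ b ∨ b ≤ a)
    (cont : ∀ (a : L) (B : Set L), a * sInf B = ⨅ b ∈ B, a * b)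
    (M : FuzzyAutomaton L Sig A) (M' : FuzzyAutomaton L Sig A')
    (hσ : {x' : A' | M'.σ x' ≠ ⊥}.Finite)
    (hδ : ∀ (s : Sig) (x' : A'), {y' : A' | M'.δ x' s y' ≠ ⊥}.Finite) :
    letI φ : A → A' → L := fun x x' =>
      ⨅ w : SimForm L Sig, himp (SimForm.eval M w x) (SimForm.eval M' w x')
    IsFuzzySimulation M M' φ ∧
      ∀ ψ : A → A' → L, IsFuzzySimulation M M' ψ → ψ ≤ φ :=
  stmt16_general lin cont M M' hδ
end
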